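/- arXiv:1310.0409 — 2 statements merged into one kernel-verified Lean document; each statement's English description precedes it below -/
import Mathlib

section
/- Let X be a topological space. Then w(X) = ona-w(X) · χ(X), where · is cardinal multiplication. -/
open Cardinal Set

universe u

/-- `V` is an open neighborhood assignment for `X`: each `V x` is an open set
containing `x`. -/
def IsONA {X : Type u} [TopologicalSpace X] (V : X → Set X) : Prop :=
  ∀ x, IsOpen (V x) ∧ x ∈ V x

/-- The weight of `X`: `ℵ₀` plus the least cardinality of a base for `X`. -/
noncomputable def weight (X : Type u) [TopologicalSpace X] : Cardinal.{u} :=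
  Cardinal.aleph0 + sInf {c : Cardinal.{u} |
    ∃ B : Set (Set X), TopologicalSpace.IsTopologicalBasis B ∧ #B = c}

/-- The character of `X`: `ℵ₀` plus the least cardinal `κ` such that every point has a
local base of cardinality at most `κ`. -/
noncomputable def character (X : Type u) [TopologicalSpace X] : Cardinal.{u} :=
  Cardinal.aleph0 + sInf {κ : Cardinal.{u} |
    ∀ x : X, ∃ B : Set (Set X),
      (∀ V ∈ B, IsOpen V ∧ x ∈ V) ∧
      (∀ U : Set X, IsOpen U → x ∈ U → ∃ V ∈ B, V ⊆ U) ∧ #B ≤ κ}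

/-- The ona-weight of `X`: `ℵ₀` plus the least cardinal `κ` such that every open
neighborhood assignment has an open neighborhood assignment refinement whose range has
cardinality at most `κ`. -/
noncomputable def onaWeight (X : Type u) [TopologicalSpace X] : Cardinal.{u} :=
  Cardinal.aleph0 + sInf {κ : Cardinal.{u} |
    ∀ V : X → Set X, IsONA V →
      ∃ W : X → Set X, IsONA W ∧ (∀ x, W x ⊆ V x) ∧ #(Set.range W) ≤ κ}

/- A single open neighborhood assignment cannot capture a local base, but `χ(X)` of them can:
index the local bases at all points by one set `Λ` of size `χ(X)`, so that `i ↦ V i x`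
enumerates a local base at `x`. Refining each `V i` by an assignment with at most `ona-w(X)`
values and collecting all values gives a base of size `ona-w(X) · χ(X)`. Conversely a base
of size `w(X)` yields local bases and refinements of that size. -/

open TopologicalSpace

def IsOpenNhdBase {X : Type u} [TopologicalSpace X] (x : X) (B : Set (Set X)) : Prop :=
  (∀ V ∈ B, IsOpen V ∧ x ∈ V) ∧ ∀ U : Set X, IsOpen U → x ∈ U → ∃ V ∈ B, V ⊆ U

namespace TopologicalSpace.IsTopologicalBasis

variable {X : Type u} [TopologicalSpace X] {B : Set (Set X)}

lemma isOpenNhdBase_sep_mem (hB : IsTopologicalBasis B) (x : X) :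
    IsOpenNhdBase x {U ∈ B | x ∈ U} := by
  refine ⟨fun V hV => ⟨hB.isOpen hV.1, hV.2⟩, fun U hU hxU => ?_⟩
  obtain ⟨V, hVB, hxV, hVU⟩ := hB.exists_subset_of_mem_open hxU hU
  exact ⟨V, ⟨hVB, hxV⟩, hVU⟩

lemma exists_refinement_range_subset (hB : IsTopologicalBasis B) {V : X → Set X}
    (hV : IsONA V) : ∃ W : X → Set X, IsONA W ∧ (∀ x, W x ⊆ V x) ∧ range W ⊆ B := by
  choose W hWB hxW hWV using fun x => hB.exists_subset_of_mem_open (hV x).2 (hV x).1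
  exact ⟨W, fun x => ⟨hB.isOpen (hWB x), hxW x⟩, hWV, range_subset_iff.mpr hWB⟩

end TopologicalSpace.IsTopologicalBasis

lemma isTopologicalBasis_iUnion_range_of_refines {X ι : Type*} [TopologicalSpace X]
    {V W : ι → X → Set X} (hW : ∀ i, IsONA (W i)) (hWV : ∀ i x, W i x ⊆ V i x)
    (hV : ∀ x (U : Set X), IsOpen U → x ∈ U → ∃ i, V i x ⊆ U) :
    IsTopologicalBasis (⋃ i, range (W i)) := by
  refine isTopologicalBasis_of_isOpen_of_nhds ?_ fun x U hxU hU => ?_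
  · simp only [mem_iUnion, mem_range]
    rintro _ ⟨i, x, rfl⟩
    exact (hW i x).1
  · obtain ⟨i, hiU⟩ := hV x U hU hxU
    exact ⟨W i x, mem_iUnion.mpr ⟨i, x, rfl⟩, (hW i x).2, (hWV i x).trans hiU⟩

section CardinalInvariants

variable {X : Type u} [TopologicalSpace X]

lemma aleph0_le_weight : ℵ₀ ≤ weight X := le_self_add

lemma aleph0_le_character : ℵ₀ ≤ character X := le_self_add

lemma aleph0_le_onaWeight : ℵ₀ ≤ onaWeight X := le_self_add

lemma weight_le_of_isTopologicalBasis {B : Set (Set X)} (hB : IsTopologicalBasis B) :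
    weight X ≤ ℵ₀ + #B := by
  unfold weight
  gcongr
  exact csInf_le' ⟨B, hB, rfl⟩

lemma exists_isTopologicalBasis_mk_le_weight :
    ∃ B : Set (Set X), IsTopologicalBasis B ∧ #B ≤ weight X := by
  obtain ⟨B, hB, hcard⟩ := csInf_mem (⟨_, _, isTopologicalBasis_opens, rfl⟩ :
    {c : Cardinal.{u} | ∃ B : Set (Set X), IsTopologicalBasis B ∧ #B = c}.Nonempty)
  exact ⟨B, hB, hcard.trans_le le_add_self⟩

lemma character_le_of_forall_exists_isOpenNhdBase {κ : Cardinal.{u}}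
    (h : ∀ x : X, ∃ B, IsOpenNhdBase x B ∧ #B ≤ κ) : character X ≤ ℵ₀ + κ := by
  unfold character
  gcongr
  refine csInf_le' fun x => ?_
  obtain ⟨B, hB, hBκ⟩ := h x
  exact ⟨B, hB.1, hB.2, hBκ⟩

lemma exists_isOpenNhdBase_mk_le_character (x : X) :
    ∃ B, IsOpenNhdBase x B ∧ #B ≤ character X := by
  have hmem := csInf_mem (⟨#(Set X), fun x =>
      ⟨{U | IsOpen U ∧ x ∈ U}, fun _ hV => hV, fun U hU hx => ⟨U, ⟨hU, hx⟩, subset_rfl⟩,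
        mk_set_le _⟩⟩ :
    {κ : Cardinal.{u} | ∀ x : X, ∃ B : Set (Set X), (∀ V ∈ B, IsOpen V ∧ x ∈ V) ∧
      (∀ U : Set X, IsOpen U → x ∈ U → ∃ V ∈ B, V ⊆ U) ∧ #B ≤ κ}.Nonempty)
  obtain ⟨B, hopen, hbase, hcard⟩ := hmem x
  exact ⟨B, ⟨hopen, hbase⟩, hcard.trans le_add_self⟩

lemma onaWeight_le_of_forall_exists_refinement {κ : Cardinal.{u}}
    (h : ∀ V : X → Set X, IsONA V →
      ∃ W : X → Set X, IsONA W ∧ (∀ x, W x ⊆ V x) ∧ #(range W) ≤ κ) :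
    onaWeight X ≤ ℵ₀ + κ := by
  unfold onaWeight
  gcongr
  exact csInf_le' h

lemma exists_refinement_mk_range_le_onaWeight {V : X → Set X} (hV : IsONA V) :
    ∃ W : X → Set X, IsONA W ∧ (∀ x, W x ⊆ V x) ∧ #(range W) ≤ onaWeight X := by
  have hmem := csInf_mem (⟨#(Set X), fun V hV => ⟨V, hV, fun _ => subset_rfl, mk_set_le _⟩⟩ :
    {κ : Cardinal.{u} | ∀ V : X → Set X, IsONA V →
      ∃ W : X → Set X, IsONA W ∧ (∀ x, W x ⊆ V x) ∧ #(range W) ≤ κ}.Nonempty)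
  obtain ⟨W, hW, hWV, hcard⟩ := hmem V hV
  exact ⟨W, hW, hWV, hcard.trans le_add_self⟩

lemma exists_isOpenNhdBase_range_character_out (x : X) :
    ∃ f : (character X).out → Set X, IsOpenNhdBase x (range f) := by
  obtain ⟨B, hB, hcard⟩ := exists_isOpenNhdBase_mk_le_character x
  obtain ⟨V, hV, -⟩ := hB.2 univ isOpen_univ (mem_univ x)
  have hemb : Nonempty (B ↪ (character X).out) := by
    rwa [← le_def, mk_out]
  obtain ⟨f, hf⟩ := Function.exists_surjective_iff.mpr ⟨⟨fun _ => ⟨V, hV⟩⟩, hemb⟩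
  refine ⟨Subtype.val ∘ f, ?_⟩
  rwa [range_comp, hf.range_eq, image_univ, Subtype.range_coe]

lemma character_le_weight : character X ≤ weight X := by
  obtain ⟨B, hB, hcard⟩ := exists_isTopologicalBasis_mk_le_weight (X := X)
  calc character X ≤ ℵ₀ + weight X :=
        character_le_of_forall_exists_isOpenNhdBase fun x =>
          ⟨_, hB.isOpenNhdBase_sep_mem x, (mk_le_mk_of_subset (sep_subset _ _)).trans hcard⟩
    _ = weight X := add_eq_right aleph0_le_weight aleph0_le_weight

lemma onaWeight_le_weight : onaWeight X ≤ weight X := by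
  obtain ⟨B, hB, hcard⟩ := exists_isTopologicalBasis_mk_le_weight (X := X)
  calc onaWeight X ≤ ℵ₀ + weight X :=
        onaWeight_le_of_forall_exists_refinement fun V hV => by
          obtain ⟨W, hW, hWV, hWB⟩ := hB.exists_refinement_range_subset hV
          exact ⟨W, hW, hWV, (mk_le_mk_of_subset hWB).trans hcard⟩
    _ = weight X := add_eq_right aleph0_le_weight aleph0_le_weight

lemma weight_le_onaWeight_mul_character : weight X ≤ onaWeight X * character X := by
  choose V hV using exists_isOpenNhdBase_range_character_out (X := X)
  have hona : ∀ i, IsONA fun x => V x i := fun i x => (hV x).1 _ (mem_range_self i)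
  choose W hW hWV hWcard using fun i => exists_refinement_mk_range_le_onaWeight (hona i)
  have hbasis := isTopologicalBasis_iUnion_range_of_refines hW hWV fun x U hU hxU => by
    obtain ⟨_, ⟨i, rfl⟩, hiU⟩ := (hV x).2 U hU hxU
    exact ⟨i, hiU⟩
  have hmul : ℵ₀ ≤ onaWeight X * character X :=
    aleph0_le_onaWeight.trans (le_mul_of_one_le_right' (one_le_aleph0.trans aleph0_le_character))
  calc weight X ≤ ℵ₀ + #(⋃ i, range (W i)) := weight_le_of_isTopologicalBasis hbasis
    _ ≤ ℵ₀ + character X * onaWeight X := by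
        refine add_le_add_right ((mk_iUnion_le _).trans ?_) _
        rw [mk_out]
        exact mul_le_mul_right (ciSup_le' hWcard) _
    _ = onaWeight X * character X := by
        rw [mul_comm]
        exact add_eq_right hmul hmul

end CardinalInvariants

/-- For every topological space `X`, `w(X) = ona-w(X) · χ(X)`. -/
theorem stmt13 (X : Type u) [TopologicalSpace X] :
    weight X = onaWeight X * character X :=
  le_antisymm weight_le_onaWeight_mul_character <| by
    calc onaWeight X * character X ≤ weight X * weight X :=
          mul_le_mul' onaWeight_le_weight character_le_weight
      _ = weight X := mul_eq_self aleph0_le_weight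
end

section
/- Let X be a first countable topological space. Then d(X) = ona-d(X). -/
open Cardinal Set

universe u

/-- The density of `X`: `ℵ₀` plus the least cardinality of a dense subset of `X`. -/
noncomputable def density (X : Type u) [TopologicalSpace X] : Cardinal.{u} :=
  Cardinal.aleph0 + sInf {c : Cardinal.{u} | ∃ D : Set X, Dense D ∧ #D = c}

/-- The ona-density of `X`: `ℵ₀` plus the least cardinal `κ` such that for every open
neighborhood assignment `(V_x)_{x∈X}` there is `D ⊆ X` with `|D| ≤ κ` meeting every
`V_x`. -/
noncomputable def onaDensity (X : Type u) [TopologicalSpace X] : Cardinal.{u} :=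
  Cardinal.aleph0 + sInf {κ : Cardinal.{u} |
    ∀ V : X → Set X, IsONA V →
      ∃ D : Set X, #D ≤ κ ∧ ∀ x, (D ∩ V x).Nonempty}

/-! In a first countable space, fix a decreasing neighbourhood base `(u x n)ₙ` at each point `x`.
For each `n`, a set meeting every member of the assignment `x ↦ interior (u x n)` exists of size
at most `κ = ona-d(X)`; the union of these countably many sets meets every nonempty open set,
so it is dense and has size at most `ℵ₀ · κ`. The reverse inequality holds in every space,
since a dense set meets every nonempty open set. -/

section

variable {X : Type u} [TopologicalSpace X]

theorem Dense.inter_nonempty_of_isONA {D : Set X} (hD : Dense D) {V : X → Set X}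
    (hV : IsONA V) (x : X) : (D ∩ V x).Nonempty :=
  inter_comm (V x) D ▸ hD.inter_open_nonempty (V x) (hV x).1 ⟨x, (hV x).2⟩

theorem isONA_interior_of_hasBasis {ι : Type*} {p : ι → Prop} {s : X → ι → Set X}
    (hs : ∀ x, (nhds x).HasBasis p (s x)) {i : ι} (hi : p i) :
    IsONA fun x => interior (s x i) :=
  fun x => ⟨isOpen_interior, mem_interior_iff_mem_nhds.2 ((hs x).mem_of_mem hi)⟩

theorem exists_dense_mk_le_aleph0_mul_of_forall_isONA [FirstCountableTopology X]
    {κ : Cardinal.{u}}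
    (hκ : ∀ V : X → Set X, IsONA V → ∃ D : Set X, #D ≤ κ ∧ ∀ x, (D ∩ V x).Nonempty) :
    ∃ D : Set X, Dense D ∧ #D ≤ ℵ₀ * κ := by
  choose u hu using fun x : X => (nhds x).exists_antitone_basis
  choose D hDκ hDmeets using fun n : ℕ =>
    hκ _ (isONA_interior_of_hasBasis (fun x => (hu x).toHasBasis) (i := n) trivial)
  refine ⟨⋃ n, D n, ?_, ?_⟩
  · refine dense_iff_inter_open.2 fun U hU ⟨x, hx⟩ => ?_
    obtain ⟨n, hn⟩ := (hu x).mem_iff.mp (hU.mem_nhds hx)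
    obtain ⟨d, hdD, hdu⟩ := hDmeets n x
    exact ⟨d, hn (interior_subset hdu), mem_iUnion.2 ⟨n, hdD⟩⟩
  · have hunion := mk_iUnion_le_lift D
    simp only [lift_uzero, mk_nat, lift_aleph0] at hunion
    exact hunion.trans (by gcongr; exact ciSup_le hDκ)

theorem density_le_aleph0_add_mk {D : Set X} (hD : Dense D) : density X ≤ ℵ₀ + #D := by
  unfold density
  gcongr
  exact csInf_le (OrderBot.bddBelow _) ⟨D, hD, rfl⟩

theorem exists_dense_mk_le_density : ∃ D : Set X, Dense D ∧ #D ≤ density X := by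
  have hne : {c : Cardinal.{u} | ∃ D : Set X, Dense D ∧ #D = c}.Nonempty :=
    ⟨_, univ, dense_univ, rfl⟩
  obtain ⟨D, hD, hDc⟩ := csInf_mem hne
  exact ⟨D, hD, hDc.le.trans le_add_self⟩

theorem onaDensity_le_aleph0_add_mk {D : Set X} (hD : Dense D) : onaDensity X ≤ ℵ₀ + #D := by
  unfold onaDensity
  gcongr
  exact csInf_le (OrderBot.bddBelow _) fun V hV => ⟨D, le_rfl, hD.inter_nonempty_of_isONA hV⟩

theorem exists_mk_le_onaDensity {V : X → Set X} (hV : IsONA V) :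
    ∃ D : Set X, #D ≤ onaDensity X ∧ ∀ x, (D ∩ V x).Nonempty := by
  have hne : {κ : Cardinal.{u} | ∀ V : X → Set X, IsONA V →
      ∃ D : Set X, #D ≤ κ ∧ ∀ x, (D ∩ V x).Nonempty}.Nonempty :=
    ⟨#(univ : Set X), fun V hV => ⟨univ, le_rfl, dense_univ.inter_nonempty_of_isONA hV⟩⟩
  obtain ⟨D, hD, hmeets⟩ := csInf_mem hne V hV
  exact ⟨D, hD.trans le_add_self, hmeets⟩

theorem onaDensity_le_density : onaDensity X ≤ density X := by
  obtain ⟨D, hD, hDd⟩ := exists_dense_mk_le_density (X := X)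
  have hℵ₀ : ℵ₀ ≤ density X := le_self_add
  calc onaDensity X ≤ ℵ₀ + #D := onaDensity_le_aleph0_add_mk hD
    _ ≤ ℵ₀ + density X := by gcongr
    _ = density X := add_eq_right hℵ₀ hℵ₀

theorem density_le_onaDensity [FirstCountableTopology X] : density X ≤ onaDensity X := by
  obtain ⟨D, hD, hDκ⟩ :=
    exists_dense_mk_le_aleph0_mul_of_forall_isONA (X := X) fun _ hV => exists_mk_le_onaDensity hV
  have hℵ₀ : ℵ₀ ≤ onaDensity X := le_self_add
  calc density X ≤ ℵ₀ + #D := density_le_aleph0_add_mk hD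
    _ ≤ ℵ₀ + ℵ₀ * onaDensity X := by gcongr
    _ = onaDensity X := by rw [aleph0_mul_eq hℵ₀, add_eq_right hℵ₀ hℵ₀]

end

/-- For every first countable topological space `X`, `d(X) = ona-d(X)`. -/
theorem stmt16 (X : Type u) [TopologicalSpace X] [FirstCountableTopology X] :
    density X = onaDensity X :=
  density_le_onaDensity.antisymm onaDensity_le_density
end
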